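/- arXiv:1609.00914 — 7 statements merged into one kernel-verified Lean document; each statement's English description precedes it below -/
import Mathlib

section
/- For every integer d ≥ 2, the equation (d+1)(1-x) + (1+dx)·ln(x) = 0 has a unique root x* in the open interval (0,1). -/
/-!
Divide `g` by the positive factor `1 + d x`: the quotient
`φ(x) = log x + (d+1)(1-x)/(1+dx)` has the same zeros on `(0,1)`, and its derivative factors as
`φ'(x) = (d²x - 1)(x - 1) / (x (1+dx)²)`. Hence for `d > 1` the function `φ` increases on
`(0, 1/d²]` and decreases on `[1/d², 1]`. Since `φ(1) = 0`, `φ` is positive on `[1/d², 1)`,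
while `φ → -∞` at `0⁺`; so `φ` has exactly one zero in `(0,1)`, and it lies in `(0, 1/d²)`.
-/

open Real Set Filter Topology

noncomputable def phi (d x : ℝ) : ℝ := log x + (d + 1) * (1 - x) / (1 + d * x)

section

variable {d x : ℝ}

lemma mul_phi_eq (hd : 0 ≤ d) (hx : 0 < x) :
    (1 + d * x) * phi d x = (d + 1) * (1 - x) + (1 + d * x) * log x := by
  have : 1 + d * x ≠ 0 := by positivity
  unfold phi
  field_simp
  ring

lemma hasDerivAt_phi (hd : 0 ≤ d) (hx : 0 < x) :
    HasDerivAt (phi d) ((d ^ 2 * x - 1) * (x - 1) / (x * (1 + d * x) ^ 2)) x := by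
  have hden : 0 < 1 + d * x := by positivity
  have hlin : HasDerivAt (fun y => 1 + d * y) d x := by
    simpa using ((hasDerivAt_id x).const_mul d).const_add 1
  have hnum : HasDerivAt (fun y => (d + 1) * (1 - y)) (-(d + 1)) x := by
    simpa using ((hasDerivAt_id x).const_sub 1).const_mul (d + 1)
  refine ((hasDerivAt_log hx.ne').add (hnum.div hlin hden.ne')).congr_deriv ?_
  field_simp
  ring

lemma continuousOn_phi (hd : 0 ≤ d) : ContinuousOn (phi d) (Ioi 0) := fun _ hx =>
  (hasDerivAt_phi hd hx).continuousAt.continuousWithinAt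

lemma strictMonoOn_phi (hd : 1 ≤ d) : StrictMonoOn (phi d) (Ioc 0 (d ^ 2)⁻¹) := by
  refine strictMonoOn_of_deriv_pos (convex_Ioc _ _)
    ((continuousOn_phi (by linarith)).mono Ioc_subset_Ioi_self) fun x hx => ?_
  rw [interior_Ioc] at hx
  obtain ⟨hx0, hxc⟩ := hx
  rw [(hasDerivAt_phi (by linarith) hx0).deriv]
  have hd2 : 1 ≤ d ^ 2 := one_le_pow₀ hd
  have hdx : d ^ 2 * x < 1 := by
    rwa [← mul_one (d ^ 2)⁻¹, lt_inv_mul_iff₀ (by positivity)] at hxc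
  have hx1 : x < 1 := by nlinarith
  exact div_pos (mul_pos_of_neg_of_neg (by linarith) (by linarith)) (by positivity)

lemma strictAntiOn_phi (hd : 0 < d) : StrictAntiOn (phi d) (Icc (d ^ 2)⁻¹ 1) := by
  have hc : 0 < (d ^ 2)⁻¹ := by positivity
  refine strictAntiOn_of_deriv_neg (convex_Icc _ _)
    ((continuousOn_phi hd.le).mono fun y hy => hc.trans_le hy.1) fun x hx => ?_
  rw [interior_Icc] at hx
  obtain ⟨hcx, hx1⟩ := hx
  have hx0 := hc.trans hcx
  rw [(hasDerivAt_phi hd.le hx0).deriv]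
  have hdx : 1 < d ^ 2 * x := by rwa [inv_lt_iff_one_lt_mul₀' (by positivity)] at hcx
  exact div_neg_of_neg_of_pos (mul_neg_of_pos_of_neg (by linarith) (by linarith)) (by positivity)

lemma phi_one (d : ℝ) : phi d 1 = 0 := by simp [phi]

lemma phi_pos (hd : 0 < d) (hx : x ∈ Ico (d ^ 2)⁻¹ 1) : 0 < phi d x := by
  have hc1 : (d ^ 2)⁻¹ ≤ 1 := hx.1.trans hx.2.le
  simpa [phi_one] using
    strictAntiOn_phi hd ⟨hx.1, hx.2.le⟩ ⟨hc1, le_rfl⟩ hx.2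

lemma tendsto_phi_nhdsGT_zero (d : ℝ) : Tendsto (phi d) (𝓝[>] 0) atBot := by
  have hrat : ContinuousAt (fun x => (d + 1) * (1 - x) / (1 + d * x)) 0 :=
    ContinuousAt.div (by fun_prop) (by fun_prop) (by simp)
  exact tendsto_log_nhdsGT_zero.atBot_add (hrat.tendsto.mono_left nhdsWithin_le_nhds)

theorem existsUnique_phi_eq_zero (hd : 1 < d) : ∃! x ∈ Ioo 0 1, phi d x = 0 := by
  set c := (d ^ 2)⁻¹
  have hc0 : 0 < c := by positivity
  have hc1 : c < 1 := inv_lt_one_of_one_lt₀ (one_lt_pow₀ hd two_ne_zero)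
  obtain ⟨a, ⟨ha0, hac⟩, hφa⟩ : ∃ a ∈ Ioo 0 c, phi d a < 0 :=
    (((tendsto_phi_nhdsGT_zero d).eventually_lt_atBot 0).and (Ioo_mem_nhdsGT hc0)).exists
      |>.imp fun _ h => ⟨h.2, h.1⟩
  obtain ⟨x, ⟨hax, hxc⟩, hφx⟩ := intermediate_value_Icc hac.le
    ((continuousOn_phi (by linarith)).mono fun y hy => ha0.trans_le hy.1)
    ⟨hφa.le, (phi_pos (by linarith) ⟨le_rfl, hc1⟩).le⟩
  have hx0 := ha0.trans_le hax
  refine ⟨x, ⟨⟨hx0, hxc.trans_lt hc1⟩, hφx⟩, fun y ⟨hy, hφy⟩ => ?_⟩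
  have hyc : y < c := not_le.1 fun hcy => (phi_pos (by linarith) ⟨hcy, hy.2⟩).ne' hφy
  exact strictMonoOn_phi hd.le |>.injOn ⟨hy.1, hyc.le⟩ ⟨hx0, hxc⟩ (hφy.trans hφx.symm)

end

/-- For every integer `d ≥ 2`, the equation `(d+1)(1-x) + (1+dx)·ln x = 0`
has a unique root `x*` in the open interval `(0,1)`. -/
theorem unique_root_in_Ioo (d : ℕ) (hd : 2 ≤ d) :
    ∃! x : ℝ, x ∈ Set.Ioo (0:ℝ) 1 ∧
      ((d:ℝ) + 1) * (1 - x) + (1 + (d:ℝ) * x) * Real.log x = 0 := by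
  have hd' : (1 : ℝ) < d := by exact_mod_cast hd
  refine (existsUnique_congr fun x => and_congr_right fun hx => ?_).1
    (existsUnique_phi_eq_zero hd')
  have hx0 : 0 < x := hx.1
  rw [← mul_phi_eq (by positivity) hx0, mul_eq_zero, or_iff_right (by positivity)]
end

section
/- Let d ≥ 2 be an integer, c > 0 real, and let γ_d = min_{x∈(0,1)} (-ln x/(1-x)^d). If c < γ_d then the sequence defined by t_{-1}=0, t_{k+1} = exp(-c(1-t_k)^d) converges to 1, i.e., the equation t = exp(-c(1-t)^d) has no root in (0,1). -/
/-- Let `d ≥ 2`, `c > 0`, and `γ_d` the minimum over `(0,1)` of `-ln x/(1-x)^d`.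
If `c < γ_d` then the sequence `t_{-1} = 0`, `t_{k+1} = exp(-c(1-t_k)^d)`
converges to `1`, i.e. the equation `t = exp(-c(1-t)^d)` has no root in `(0,1)`. -/
theorem subcritical_tendsto_one (d : ℕ) (hd : 2 ≤ d) (c γ : ℝ) (hc : 0 < c)
    (hγ : IsLeast ((fun x : ℝ => -Real.log x / (1 - x) ^ d) '' Set.Ioo (0:ℝ) 1) γ)
    (hcγ : c < γ)
    (t : ℕ → ℝ) (h0 : t 0 = 0)
    (hrec : ∀ k, t (k + 1) = Real.exp (-c * (1 - t k) ^ d)) :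
    Filter.Tendsto t Filter.atTop (nhds 1) ∧
      ¬ ∃ x ∈ Set.Ioo (0:ℝ) 1, x = Real.exp (-c * (1 - x) ^ d) := by
  -- key strict inequality on (0,1)
  have key : ∀ x ∈ Set.Ioo (0:ℝ) 1, x < Real.exp (-c * (1 - x) ^ d) := by
    intro x hx
    have hψ : γ ≤ -Real.log x / (1 - x) ^ d := hγ.2 ⟨x, hx, rfl⟩
    have hpos : (0:ℝ) < (1 - x) ^ d := pow_pos (by linarith [hx.2]) d
    have h1 : c < -Real.log x / (1 - x) ^ d := lt_of_lt_of_le hcγ hψ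
    have h2 : c * (1 - x) ^ d < -Real.log x := (lt_div_iff₀ hpos).mp h1
    have h3 : Real.log x < -c * (1 - x) ^ d := by linarith
    calc x = Real.exp (Real.log x) := (Real.exp_log hx.1).symm
      _ < Real.exp (-c * (1 - x) ^ d) := Real.exp_lt_exp.mpr h3
  -- basic facts about the sequence
  have aux : ∀ k, 0 ≤ t k ∧ t k < 1 ∧ t k ≤ t (k + 1) := by
    intro k
    induction k with
    | zero =>
      refine ⟨le_of_eq h0.symm, by rw [h0]; norm_num, ?_⟩
      rw [h0, hrec 0, h0]
      exact le_of_lt (Real.exp_pos _)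
    | succ n ih =>
      obtain ⟨h0n, h1n, hmn⟩ := ih
      have hpos : 0 < t (n + 1) := by rw [hrec n]; exact Real.exp_pos _
      have hlt1 : t (n + 1) < 1 := by
        rw [hrec n]
        have : -c * (1 - t n) ^ d < 0 := by
          have := pow_pos (by linarith : (0:ℝ) < 1 - t n) d
          nlinarith
        calc Real.exp (-c * (1 - t n) ^ d) < Real.exp 0 := Real.exp_lt_exp.mpr this
          _ = 1 := Real.exp_zero
      refine ⟨le_of_lt hpos, hlt1, ?_⟩
      have := key (t (n + 1)) ⟨hpos, hlt1⟩
      rw [← hrec (n + 1)] at this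
      exact le_of_lt this
  have mono : Monotone t := monotone_nat_of_le_succ fun n => (aux n).2.2
  have bdd : BddAbove (Set.range t) := ⟨1, by rintro y ⟨k, rfl⟩; exact le_of_lt (aux k).2.1⟩
  set L : ℝ := ⨆ k, t k with hL
  have hT : Filter.Tendsto t Filter.atTop (nhds L) := tendsto_atTop_ciSup mono bdd
  have hL1 : L ≤ 1 := ciSup_le fun k => le_of_lt (aux k).2.1
  have hL0 : 0 < L := by
    have h1 : t 1 ≤ L := le_ciSup bdd 1
    have : 0 < t 1 := by rw [hrec 0]; exact Real.exp_pos _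
    linarith
  -- limit is a fixed point
  have hshift : Filter.Tendsto (fun k => t (k + 1)) Filter.atTop (nhds L) :=
    hT.comp (Filter.tendsto_add_atTop_nat 1)
  have hcont : Filter.Tendsto (fun k => Real.exp (-c * (1 - t k) ^ d)) Filter.atTop
      (nhds (Real.exp (-c * (1 - L) ^ d))) := by
    have : Continuous fun x : ℝ => Real.exp (-c * (1 - x) ^ d) := by continuity
    exact (this.tendsto L).comp hT
  have hfix : L = Real.exp (-c * (1 - L) ^ d) := by
    have := tendsto_nhds_unique hshift (by simpa only [hrec] using hcont)
    exact this
  have hLeq1 : L = 1 := by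
    by_contra h
    have hlt : L < 1 := lt_of_le_of_ne hL1 h
    have := key L ⟨hL0, hlt⟩
    rw [← hfix] at this
    exact lt_irrefl _ this
  constructor
  · rw [← hLeq1]; exact hT
  · rintro ⟨x, hx, hxeq⟩
    have := key x hx
    rw [← hxeq] at this
    exact lt_irrefl _ this
end

section
/- Let d ≥ 2 be an integer and γ_d = min_{x∈(0,1)} (-ln x/(1-x)^d). If c > γ_d, then the equation t = exp(-c(1-t)^d) has a root t in (0,1), and the sequence defined by t_{-1}=0, t_{k+1} = exp(-c(1-t_k)^d) converges to the smallest such root. -/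
/-- Let `d ≥ 2` and `γ_d` the minimum over `(0,1)` of `-ln x/(1-x)^d`.
If `c > γ_d`, then the equation `t = exp(-c(1-t)^d)` has a root `t ∈ (0,1)`,
and the sequence `t_{-1} = 0`, `t_{k+1} = exp(-c(1-t_k)^d)` converges to the
smallest such root. -/
theorem supercritical_tendsto_smallest_root (d : ℕ) (hd : 2 ≤ d) (c γ : ℝ)
    (hγ : IsLeast ((fun x : ℝ => -Real.log x / (1 - x) ^ d) '' Set.Ioo (0:ℝ) 1) γ)
    (hcγ : γ < c)
    (t : ℕ → ℝ) (h0 : t 0 = 0)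
    (hrec : ∀ k, t (k + 1) = Real.exp (-c * (1 - t k) ^ d)) :
    ∃ tstar : ℝ,
      IsLeast {x : ℝ | x ∈ Set.Ioo (0:ℝ) 1 ∧ x = Real.exp (-c * (1 - x) ^ d)} tstar ∧
      Filter.Tendsto t Filter.atTop (nhds tstar) := by
  obtain ⟨x0, hx0, hx0γ⟩ := hγ.1
  obtain ⟨hx0pos, hx0lt⟩ := hx0
  have h1x0 : 0 < (1 - x0) ^ d := pow_pos (by linarith) d
  have hlog : Real.log x0 < 0 := Real.log_neg hx0pos hx0lt
  have hγpos : 0 < γ := by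
    rw [← hx0γ]; exact div_pos (by linarith) h1x0
  have hc : 0 < c := hγpos.trans hcγ
  -- fixed map monotone
  have fmono : ∀ x y : ℝ, x ≤ y → y ≤ 1 →
      Real.exp (-c * (1 - x) ^ d) ≤ Real.exp (-c * (1 - y) ^ d) := by
    intro x y hxy hy1
    apply Real.exp_le_exp.2
    have hp : (1 - y) ^ d ≤ (1 - x) ^ d :=
      pow_le_pow_left₀ (by linarith) (by linarith) d
    nlinarith
  have hfx0 : Real.exp (-c * (1 - x0) ^ d) < x0 := by
    have h1 : -Real.log x0 < c * (1 - x0) ^ d := by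
      have := (div_lt_iff₀ h1x0).1 (hx0γ.trans_lt hcγ)
      linarith
    calc Real.exp (-c * (1 - x0) ^ d) < Real.exp (Real.log x0) :=
          Real.exp_lt_exp.2 (by linarith)
      _ = x0 := Real.exp_log hx0pos
  have hbound : ∀ k, t k ≤ x0 := by
    intro k
    induction k with
    | zero => rw [h0]; exact hx0pos.le
    | succ k ih =>
      rw [hrec k]
      exact (fmono _ _ ih hx0lt.le).trans hfx0.le
  have hstep : ∀ k, t k ≤ t (k + 1) := by
    intro k
    induction k with
    | zero => rw [h0, hrec 0]; exact (Real.exp_pos _).le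
    | succ k ih =>
      rw [hrec k, hrec (k + 1)]
      exact fmono _ _ ih ((hbound (k + 1)).trans hx0lt.le)
  have hmono : Monotone t := monotone_nat_of_le_succ hstep
  have hbdd : BddAbove (Set.range t) := by
    refine ⟨x0, ?_⟩
    rintro y ⟨k, rfl⟩
    exact hbound k
  set tstar := ⨆ k, t k with htstar
  have htend : Filter.Tendsto t Filter.atTop (nhds tstar) :=
    tendsto_atTop_ciSup hmono hbdd
  have htle : tstar ≤ x0 := ciSup_le hbound
  have ht1 : t 1 ≤ tstar := le_ciSup hbdd 1
  have htpos : 0 < tstar := by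
    have : (0:ℝ) < t 1 := by rw [hrec 0]; exact Real.exp_pos _
    linarith
  have hcont : Continuous fun x : ℝ => Real.exp (-c * (1 - x) ^ d) := by
    continuity
  have h2 : Filter.Tendsto (fun k => Real.exp (-c * (1 - t k) ^ d)) Filter.atTop
      (nhds (Real.exp (-c * (1 - tstar) ^ d))) := (hcont.tendsto tstar).comp htend
  have h1 : Filter.Tendsto (fun k => t (k + 1)) Filter.atTop (nhds tstar) :=
    htend.comp (Filter.tendsto_add_atTop_nat 1)
  have hfix : tstar = Real.exp (-c * (1 - tstar) ^ d) := by
    refine tendsto_nhds_unique h1 ?_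
    have : (fun k => t (k + 1)) = fun k => Real.exp (-c * (1 - t k) ^ d) :=
      funext hrec
    rw [this]; exact h2
  refine ⟨tstar, ⟨⟨⟨htpos, lt_of_le_of_lt htle hx0lt⟩, hfix⟩, ?_⟩, htend⟩
  rintro y ⟨⟨hy0, hy1⟩, hy⟩
  have : ∀ k, t k ≤ y := by
    intro k
    induction k with
    | zero => rw [h0]; exact hy0.le
    | succ k ih =>
      rw [hrec k, hy]
      exact fmono _ _ ih hy1.le
  exact ciSup_le this
end

section
/- Let d ≥ 2. If a vertex v of a finite d-dimensional simplicial complex C that is a d-core (every (d−1)-face is contained in at least two d-faces) is contained in exactly d+1 d-faces, then the link of v in C is the boundary of a d-simplex, i.e., the link consists of all d proper (d−1)-subsets of some set of d+1 vertices. -/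
/-- A finite abstract simplicial complex on vertex type `V`: a finite family of
finite sets closed under taking subsets. -/
def IsSimplicialComplex {V : Type*} [DecidableEq V] (C : Finset (Finset V)) : Prop :=
  ∀ σ ∈ C, ∀ τ ⊆ σ, τ ∈ C

/-- `C` is `d`-dimensional: all faces have at most `d+1` vertices. -/
def DimLE {V : Type*} [DecidableEq V] (C : Finset (Finset V)) (d : ℕ) : Prop :=
  ∀ σ ∈ C, σ.card ≤ d + 1

/-- `C` is a `d`-core: every `(d-1)`-face (a face with `d` vertices) is contained
in at least two `d`-faces (faces with `d+1` vertices). -/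
def IsCore {V : Type*} [DecidableEq V] (C : Finset (Finset V)) (d : ℕ) : Prop :=
  ∀ τ ∈ C, τ.card = d →
    2 ≤ (C.filter fun σ => σ.card = d + 1 ∧ τ ⊆ σ).card

/-- In a `d`-core (`d ≥ 2`), if a vertex `v` is contained in exactly `d+1`
`d`-faces, then the link of `v` is the boundary of a `d`-simplex: the `(d-1)`-faces
of the link are exactly all `d`-element subsets of some set `S` of `d+1` vertices. -/
theorem link_of_degree_d_add_one_vertex {V : Type*} [DecidableEq V]
    (d : ℕ) (hd : 2 ≤ d) (C : Finset (Finset V))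
    (hC : IsSimplicialComplex C) (hdim : DimLE C d) (hcore : IsCore C d)
    (v : V) (hv : {v} ∈ C)
    (hdeg : (C.filter fun σ => σ.card = d + 1 ∧ v ∈ σ).card = d + 1) :
    ∃ S : Finset V, S.card = d + 1 ∧ v ∉ S ∧
      (C.filter fun τ => τ.card = d ∧ v ∉ τ ∧ insert v τ ∈ C)
        = S.powersetCard d := by
  classical
  set L := C.filter fun τ => τ.card = d ∧ v ∉ τ ∧ insert v τ ∈ C with hLdef
  have hmemL : ∀ τ : Finset V, τ ∈ L ↔ (τ ∈ C ∧ τ.card = d ∧ v ∉ τ ∧ insert v τ ∈ C) := by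
    intro τ; simp [hLdef, Finset.mem_filter]
  -- |L| = d+1
  have hLcard : L.card = d + 1 := by
    rw [← hdeg]
    apply Finset.card_bij (fun τ _ => insert v τ)
    · intro τ hτ
      obtain ⟨h1, h2, h3, h4⟩ := (hmemL τ).mp hτ
      simp only [Finset.mem_filter]
      exact ⟨h4, by rw [Finset.card_insert_of_notMem h3, h2], Finset.mem_insert_self _ _⟩
    · intro τ₁ h₁ τ₂ h₂ heq
      obtain ⟨_, _, h3, _⟩ := (hmemL τ₁).mp h₁
      obtain ⟨_, _, h3', _⟩ := (hmemL τ₂).mp h₂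
      have := congrArg (fun s => Finset.erase s v) heq
      simpa [Finset.erase_insert h3, Finset.erase_insert h3'] using this
    · intro σ hσ
      simp only [Finset.mem_filter] at hσ
      obtain ⟨hσC, hσcard, hvσ⟩ := hσ
      refine ⟨σ.erase v, ?_, ?_⟩
      · rw [hmemL]
        refine ⟨hC σ hσC _ (Finset.erase_subset _ _), ?_, Finset.notMem_erase _ _, ?_⟩
        · rw [Finset.card_erase_of_mem hvσ, hσcard]; rfl
        · rw [Finset.insert_erase hvσ]; exact hσC
      · exact Finset.insert_erase hvσ
  -- the key "core" step
  have step : ∀ τ ∈ L, ∀ x ∈ τ, ∃ y, y ∉ τ ∧ insert y (τ.erase x) ∈ L := by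
    intro τ hτ x hx
    obtain ⟨h1, h2, h3, h4⟩ := (hmemL τ).mp hτ
    set ρ : Finset V := insert v (τ.erase x) with hρdef
    have hρsub : ρ ⊆ insert v τ := by
      apply Finset.insert_subset_insert
      exact Finset.erase_subset _ _
    have hρC : ρ ∈ C := hC _ h4 _ hρsub
    have hvρ : v ∉ τ.erase x := fun h => h3 (Finset.mem_of_mem_erase h)
    have hρcard : ρ.card = d := by
      rw [hρdef, Finset.card_insert_of_notMem hvρ, Finset.card_erase_of_mem hx, h2]
      omega
    have h2le := hcore ρ hρC hρcard
    -- there is a face σ ≠ insert v τ in the filter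
    have hmem1 : insert v τ ∈ C.filter fun σ => σ.card = d + 1 ∧ ρ ⊆ σ := by
      simp only [Finset.mem_filter]
      exact ⟨h4, by rw [Finset.card_insert_of_notMem h3, h2], hρsub⟩
    obtain ⟨σ, hσmem, hσne⟩ : ∃ σ ∈ C.filter fun σ => σ.card = d + 1 ∧ ρ ⊆ σ,
        σ ≠ insert v τ := by
      by_contra hcon
      push_neg at hcon
      have : (C.filter fun σ => σ.card = d + 1 ∧ ρ ⊆ σ) ⊆ {insert v τ} := by
        intro a ha; simp [hcon a ha]
      have := Finset.card_le_card this
      simp at this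
      omega
    simp only [Finset.mem_filter] at hσmem
    obtain ⟨hσC, hσcard, hρσ⟩ := hσmem
    have hvσ : v ∈ σ := hρσ (Finset.mem_insert_self _ _)
    set τ' : Finset V := σ.erase v with hτ'def
    have hτ'L : τ' ∈ L := by
      rw [hmemL]
      refine ⟨hC σ hσC _ (Finset.erase_subset _ _), ?_, Finset.notMem_erase _ _, ?_⟩
      · rw [Finset.card_erase_of_mem hvσ, hσcard]; rfl
      · rw [Finset.insert_erase hvσ]; exact hσC
    have hτ'card : τ'.card = d := ((hmemL τ').mp hτ'L).2.1
    have hsub' : τ.erase x ⊆ τ' := by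
      intro z hz
      have hzσ : z ∈ σ := hρσ (Finset.mem_insert_of_mem hz)
      have : z ≠ v := fun h => h3 (h ▸ Finset.mem_of_mem_erase hz)
      exact Finset.mem_erase.mpr ⟨this, hzσ⟩
    have hτ'ne : τ' ≠ τ := by
      intro h
      apply hσne
      rw [← Finset.insert_erase hvσ, ← hτ'def, h]
    -- extract y
    have hcard_diff : (τ' \ τ.erase x).card = 1 := by
      rw [Finset.card_sdiff_of_subset hsub', hτ'card, Finset.card_erase_of_mem hx, h2]
      omega
    obtain ⟨y, hy⟩ := Finset.card_eq_one.mp hcard_diff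
    have hyτ' : y ∈ τ' := by
      have : y ∈ τ' \ τ.erase x := hy ▸ Finset.mem_singleton_self y
      exact (Finset.mem_sdiff.mp this).1
    have hynotx : y ∉ τ.erase x := by
      have : y ∈ τ' \ τ.erase x := hy ▸ Finset.mem_singleton_self y
      exact (Finset.mem_sdiff.mp this).2
    have hτ'eq : τ' = insert y (τ.erase x) := by
      symm
      apply Finset.eq_of_subset_of_card_le
      · exact Finset.insert_subset hyτ' hsub'
      · rw [Finset.card_insert_of_notMem hynotx, Finset.card_erase_of_mem hx, h2, hτ'card]
        omega
    have hyτ : y ∉ τ := by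
      intro hyτ
      have hyx : y = x := by
        by_contra h
        exact hynotx (Finset.mem_erase.mpr ⟨h, hyτ⟩)
      apply hτ'ne
      rw [hτ'eq, hyx, Finset.insert_erase hx]
    exact ⟨y, hyτ, hτ'eq ▸ hτ'L⟩
  -- pick a base face τ₀ ∈ L
  obtain ⟨τ₀, hτ₀L⟩ : ∃ τ₀, τ₀ ∈ L := by
    apply Finset.card_pos.mp; omega
  obtain ⟨hτ₀C, hτ₀card, hvτ₀, hτ₀ins⟩ := (hmemL τ₀).mp hτ₀L
  -- choose Y
  have hYex : ∀ x : V, ∃ y : V, x ∈ τ₀ → (y ∉ τ₀ ∧ insert y (τ₀.erase x) ∈ L) := by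
    intro x
    by_cases hx : x ∈ τ₀
    · obtain ⟨y, hy1, hy2⟩ := step τ₀ hτ₀L x hx
      exact ⟨y, fun _ => ⟨hy1, hy2⟩⟩
    · exact ⟨v, fun h => absurd h hx⟩
  choose Y hY using hYex
  set T : V → Finset V := fun x => insert (Y x) (τ₀.erase x) with hTdef
  have hTL : ∀ x ∈ τ₀, T x ∈ L := fun x hx => (hY x hx).2
  have hYnot : ∀ x ∈ τ₀, Y x ∉ τ₀ := fun x hx => (hY x hx).1
  have hxnotT : ∀ x ∈ τ₀, x ∉ T x := by
    intro x hx h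
    rcases Finset.mem_insert.mp h with h | h
    · exact hYnot x hx (h ▸ hx)
    · exact (Finset.notMem_erase x τ₀) h
  have hmemT : ∀ x ∈ τ₀, ∀ z ∈ τ₀, z ≠ x → z ∈ T x := by
    intro x hx z hz hzx
    exact Finset.mem_insert_of_mem (Finset.mem_erase.mpr ⟨hzx, hz⟩)
  have hYT : ∀ x ∈ τ₀, Y x ∈ T x := fun x _ => Finset.mem_insert_self _ _
  -- M = L by counting
  set M : Finset (Finset V) := insert τ₀ (τ₀.image T) with hMdef
  have hTinj : Set.InjOn T τ₀ := by
    intro x hx x' hx' heq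
    by_contra hne
    have h1 : x' ∈ T x := hmemT x hx x' hx' (Ne.symm hne)
    rw [heq] at h1
    exact hxnotT x' hx' h1
  have hτ₀notim : τ₀ ∉ τ₀.image T := by
    intro h
    obtain ⟨x, hx, hTx⟩ := Finset.mem_image.mp h
    have := hYT x hx
    rw [hTx] at this
    exact hYnot x hx this
  have hMcard : M.card = d + 1 := by
    rw [hMdef, Finset.card_insert_of_notMem hτ₀notim, Finset.card_image_of_injOn hTinj,
      hτ₀card]
  have hMsubL : M ⊆ L := by
    intro a ha
    rcases Finset.mem_insert.mp ha with h | h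
    · exact h ▸ hτ₀L
    · obtain ⟨x, hx, hTx⟩ := Finset.mem_image.mp h
      exact hTx ▸ hTL x hx
  have hML : M = L := Finset.eq_of_subset_of_card_le hMsubL (by omega)
  -- all Y x are equal pairwise
  have hpair : ∀ x ∈ τ₀, ∀ x' ∈ τ₀, x ≠ x' → Y x = Y x' := by
    intro x hx x' hx' hne
    have hτxL : T x ∈ L := hTL x hx
    have hx'Tx : x' ∈ T x := hmemT x hx x' hx' (Ne.symm hne)
    obtain ⟨y', hy'notτx, hy'L⟩ := step (T x) hτxL x' hx'Tx
    set τ' : Finset V := insert y' ((T x).erase x') with hτ'def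
    have hτ'M : τ' ∈ M := hML ▸ hy'L
    have hYxτ' : Y x ∈ τ' := by
      apply Finset.mem_insert_of_mem
      refine Finset.mem_erase.mpr ⟨?_, hYT x hx⟩
      intro h
      exact hYnot x hx (h ▸ hx')
    have hτ'neτ₀ : τ' ≠ τ₀ := by
      intro h
      exact hYnot x hx (h ▸ hYxτ')
    obtain ⟨x'', hx'', hTx''⟩ : ∃ x'' ∈ τ₀, T x'' = τ' := by
      rcases Finset.mem_insert.mp hτ'M with h | h
      · exact (hτ'neτ₀ h).elim
      · exact Finset.mem_image.mp h
    have hτ'ne : τ' ≠ T x := by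
      intro h
      have : y' ∈ T x := h ▸ Finset.mem_insert_self _ _
      exact hy'notτx this
    -- x'' ∈ {x, x'}
    have hx''cases : x'' = x' := by
      by_contra hne''
      have hx''x : x'' ≠ x := by
        intro h
        exact hτ'ne (by rw [← hTx'', h])
      -- x'' ∈ τ', but x'' ∉ T x'' = τ'
      have hx''τ' : x'' ∈ τ' := by
        apply Finset.mem_insert_of_mem
        refine Finset.mem_erase.mpr ⟨hne'', hmemT x hx x'' hx'' hx''x⟩
      rw [← hTx''] at hx''τ'
      exact hxnotT x'' hx'' hx''τ'
    -- so τ' = T x', and Y x ∈ τ' gives Y x = Y x'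
    rw [hx''cases] at hTx''
    rw [← hTx''] at hYxτ'
    rcases Finset.mem_insert.mp hYxτ' with h | h
    · exact h
    · exact ((hYnot x hx) (Finset.mem_of_mem_erase h)).elim
  -- common new vertex w
  obtain ⟨x₁, hx₁, x₂, hx₂, hx12⟩ : ∃ a ∈ τ₀, ∃ b ∈ τ₀, a ≠ b := by
    apply Finset.one_lt_card.mp; omega
  set w : V := Y x₁ with hwdef
  have hYw : ∀ x ∈ τ₀, Y x = w := by
    intro x hx
    by_cases h : x = x₁
    · rw [h]
    · exact hpair x hx x₁ hx₁ h
  have hwτ₀ : w ∉ τ₀ := hYnot x₁ hx₁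
  have hvw : v ≠ w := by
    intro h
    have := hTL x₁ hx₁
    rw [hmemL] at this
    exact this.2.2.1 (h ▸ hYT x₁ hx₁)
  refine ⟨insert w τ₀, ?_, ?_, ?_⟩
  · rw [Finset.card_insert_of_notMem hwτ₀, hτ₀card]
  · intro h
    rcases Finset.mem_insert.mp h with h | h
    · exact hvw h
    · exact hvτ₀ h
  -- final equality
  have hPsub : (insert w τ₀).powersetCard d ⊆ L := by
    intro t ht
    rw [Finset.mem_powersetCard] at ht
    obtain ⟨htsub, htcard⟩ := ht
    have hScard : (insert w τ₀).card = d + 1 := by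
      rw [Finset.card_insert_of_notMem hwτ₀, hτ₀card]
    have hdiff : ((insert w τ₀) \ t).card = 1 := by
      rw [Finset.card_sdiff_of_subset htsub, hScard, htcard]; omega
    obtain ⟨z, hz⟩ := Finset.card_eq_one.mp hdiff
    have hzS : z ∈ insert w τ₀ := by
      have : z ∈ (insert w τ₀) \ t := hz ▸ Finset.mem_singleton_self z
      exact (Finset.mem_sdiff.mp this).1
    have hznott : z ∉ t := by
      have : z ∈ (insert w τ₀) \ t := hz ▸ Finset.mem_singleton_self z
      exact (Finset.mem_sdiff.mp this).2
    have hteq : t = (insert w τ₀).erase z := by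
      apply Finset.eq_of_subset_of_card_le
      · intro a ha
        exact Finset.mem_erase.mpr ⟨fun h => hznott (h ▸ ha), htsub ha⟩
      · rw [Finset.card_erase_of_mem hzS, hScard, htcard]; omega
    rcases Finset.mem_insert.mp hzS with h | h
    · -- z = w, t = τ₀
      rw [hteq, h, Finset.erase_insert hwτ₀]
      exact hτ₀L
    · -- z ∈ τ₀, t = T z
      have hzw : w ≠ z := fun hh => hwτ₀ (hh ▸ h)
      rw [hteq, Finset.erase_insert_of_ne hzw, ← hYw z h]
      exact hTL z h
  have hPcard : ((insert w τ₀).powersetCard d).card = d + 1 := by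
    rw [Finset.card_powersetCard, Finset.card_insert_of_notMem hwτ₀, hτ₀card,
      Nat.choose_succ_self_right]
  exact (Finset.eq_of_subset_of_card_le hPsub (by omega)).symm
end

section
/- Let d ≥ 2 and let C be a finite d-core (every (d−1)-face lies in ≥ 2 d-faces). If u and v are two vertices of C, each of degree exactly d+1, contained in a common d-face σ, then σ is a d-face of a subcomplex of C isomorphic to the boundary of a (d+1)-simplex. -/
theorem link_struct {V : Type*} [DecidableEq V]
    (d : ℕ) (hd : 2 ≤ d) (C : Finset (Finset V))
    (hC : IsSimplicialComplex C) (hcore : IsCore C d)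
    (u : V)
    (hdegu : (C.filter fun σ => σ.card = d + 1 ∧ u ∈ σ).card = d + 1)
    (σ : Finset V) (hσ : σ ∈ C) (hσcard : σ.card = d + 1) (huσ : u ∈ σ) :
    ∃ x, x ∉ σ ∧
      (∀ ρ ∈ C, ρ.card = d + 1 → u ∈ ρ → ρ ⊆ insert x σ) ∧
      (∀ ρ ⊆ insert x σ, ρ.card = d + 1 → u ∈ ρ → ρ ∈ C) := by
  classical
  -- Step 1: for each a in σ.erase u, a second facet containing σ.erase a
  have hx : ∀ a : V, ∃ y : V, a ∈ σ.erase u →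
      y ∉ σ ∧ insert y (σ.erase a) ∈ C := by
    intro a
    by_cases ha : a ∈ σ.erase u
    · have haσ : a ∈ σ := Finset.mem_of_mem_erase ha
      have hcard : (σ.erase a).card = d := by
        rw [Finset.card_erase_of_mem haσ, hσcard]; omega
      have hτC : σ.erase a ∈ C := hC σ hσ _ (Finset.erase_subset _ _)
      have h2 := hcore _ hτC hcard
      have hσmem : σ ∈ C.filter fun ρ => ρ.card = d + 1 ∧ σ.erase a ⊆ ρ := by
        simp [Finset.mem_filter, hσ, hσcard, Finset.erase_subset]
      obtain ⟨G, hG, hGne⟩ := Finset.exists_mem_ne (lt_of_lt_of_le one_lt_two h2) σ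
      rw [Finset.mem_filter] at hG
      obtain ⟨hGC, hGcard, hGsub⟩ := hG
      have hss : σ.erase a ⊂ G := hGsub.ssubset_of_ne (by
        intro h; rw [h, hGcard] at hcard; omega)
      obtain ⟨y, hyG, hyne⟩ := Finset.exists_of_ssubset hss
      have hGeq : G = insert y (σ.erase a) := by
        refine (Finset.eq_of_subset_of_card_le (Finset.insert_subset hyG hGsub) ?_).symm
        rw [Finset.card_insert_of_notMem hyne, hcard, hGcard]
      have hya : y ≠ a := by
        rintro rfl
        exact hGne (by rw [hGeq, Finset.insert_erase haσ])
      have hyσ : y ∉ σ := fun h => hyne (Finset.mem_erase.mpr ⟨hya, h⟩)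
      exact ⟨y, fun _ => ⟨hyσ, hGeq ▸ hGC⟩⟩
    · exact ⟨u, fun h => absurd h ha⟩
  choose x hx using hx
  set f : V → Finset V := fun a => insert (x a) (σ.erase a) with hf
  -- basic facts about f
  have hxa : ∀ a ∈ σ.erase u, x a ∉ σ := fun a ha => (hx a ha).1
  have hfC : ∀ a ∈ σ.erase u, f a ∈ C := fun a ha => (hx a ha).2
  have hxae : ∀ a ∈ σ.erase u, x a ∉ σ.erase a := fun a ha h =>
    hxa a ha (Finset.mem_of_mem_erase h)
  have hcerase : ∀ a ∈ σ.erase u, (σ.erase a).card = d := by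
    intro a ha
    rw [Finset.card_erase_of_mem (Finset.mem_of_mem_erase ha), hσcard]; omega
  have hfcard : ∀ a ∈ σ.erase u, (f a).card = d + 1 := by
    intro a ha
    rw [hf, Finset.card_insert_of_notMem (hxae a ha), hcerase a ha]
  have hufa : ∀ a ∈ σ.erase u, u ∈ f a := by
    intro a ha
    exact Finset.mem_insert_of_mem (Finset.mem_erase.mpr
      ⟨fun h => (Finset.mem_erase.mp ha).1 h.symm, huσ⟩)
  have hafa : ∀ a ∈ σ.erase u, a ∉ f a := by
    intro a ha h
    rcases Finset.mem_insert.mp h with h | h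
    · exact hxa a ha (h ▸ Finset.mem_of_mem_erase ha)
    · exact (Finset.mem_erase.mp h).1 rfl
  -- the collection of all d-faces containing u
  set F := C.filter (fun ρ => ρ.card = d + 1 ∧ u ∈ ρ) with hF
  set T : Finset (Finset V) := insert σ ((σ.erase u).image f) with hT
  have hinj : ∀ a ∈ σ.erase u, ∀ b ∈ σ.erase u, f a = f b → a = b := by
    intro a ha b hb hab
    by_contra hne
    have haσ : a ∈ σ := Finset.mem_of_mem_erase ha
    have : a ∈ f b := by
      rw [hf]
      exact Finset.mem_insert_of_mem (Finset.mem_erase.mpr ⟨hne, haσ⟩)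
    rw [← hab] at this
    exact hafa a ha this
  have hσnotim : σ ∉ (σ.erase u).image f := by
    intro h
    obtain ⟨a, ha, hfa⟩ := Finset.mem_image.mp h
    exact hxa a ha (hfa ▸ Finset.mem_insert_self _ _)
  have hTcard : T.card = d + 1 := by
    rw [hT, Finset.card_insert_of_notMem hσnotim, Finset.card_image_of_injOn hinj,
      Finset.card_erase_of_mem huσ, hσcard]; omega
  have hTF : T ⊆ F := by
    intro ρ hρ
    rcases Finset.mem_insert.mp hρ with rfl | hρ
    · exact Finset.mem_filter.mpr ⟨hσ, hσcard, huσ⟩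
    · obtain ⟨a, ha, rfl⟩ := Finset.mem_image.mp hρ
      exact Finset.mem_filter.mpr ⟨hfC a ha, hfcard a ha, hufa a ha⟩
  have hFT : F = T := (Finset.eq_of_subset_of_card_le hTF (by rw [hTcard, hF, hdegu])).symm
  -- all the x a are equal
  have hxx : ∀ a ∈ σ.erase u, ∀ b ∈ σ.erase u, a ≠ b → x a = x b := by
    intro a ha b hb hne
    have hbea : b ∈ σ.erase a :=
      Finset.mem_erase.mpr ⟨fun h => hne h.symm, Finset.mem_of_mem_erase hb⟩
    set τ : Finset V := insert (x a) ((σ.erase a).erase b) with hτ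
    have hτsub : τ ⊆ f a := Finset.insert_subset_insert _ (Finset.erase_subset _ _)
    have hτC : τ ∈ C := hC _ (hfC a ha) _ hτsub
    have hτcard : τ.card = d := by
      rw [hτ, Finset.card_insert_of_notMem
        (fun h => hxae a ha (Finset.mem_of_mem_erase h)),
        Finset.card_erase_of_mem hbea, hcerase a ha]
      omega
    have huτ : u ∈ τ := by
      refine Finset.mem_insert_of_mem (Finset.mem_erase.mpr
        ⟨fun h => (Finset.mem_erase.mp hb).1 h.symm, Finset.mem_erase.mpr
        ⟨fun h => (Finset.mem_erase.mp ha).1 h.symm, huσ⟩⟩)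
    have h2 := hcore _ hτC hτcard
    set filt := C.filter (fun ρ => ρ.card = d + 1 ∧ τ ⊆ ρ) with hfilt
    have hsubpair : filt ⊆ {f a, f b} := by
      intro ρ hρ
      rw [hfilt, Finset.mem_filter] at hρ
      obtain ⟨hρC, hρcard, hρτ⟩ := hρ
      have hρF : ρ ∈ T := hFT ▸ Finset.mem_filter.mpr ⟨hρC, hρcard, hρτ huτ⟩
      rcases Finset.mem_insert.mp hρF with rfl | hρF
      · exact absurd (hρτ (Finset.mem_insert_self _ _)) (hxa a ha)
      · obtain ⟨c, hc, rfl⟩ := Finset.mem_image.mp hρF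
        by_cases hca : c = a
        · subst hca; exact Finset.mem_insert_self _ _
        by_cases hcb : c = b
        · subst hcb; exact Finset.mem_insert_of_mem (Finset.mem_singleton_self _)
        exfalso
        have : c ∈ τ := Finset.mem_insert_of_mem (Finset.mem_erase.mpr
          ⟨hcb, Finset.mem_erase.mpr ⟨hca, Finset.mem_of_mem_erase hc⟩⟩)
        exact hafa c hc (hρτ this)
    have hfbfilt : f b ∈ filt := by
      by_contra h
      have : filt ⊆ {f a} := by
        intro ρ hρ
        rcases Finset.mem_insert.mp (hsubpair hρ) with rfl | hρ'
        · exact Finset.mem_singleton_self _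
        · rw [Finset.mem_singleton] at hρ'
          exact absurd (hρ' ▸ hρ) h
      have := Finset.card_le_card this
      simp at this
      omega
    have hτfb : τ ⊆ f b := (Finset.mem_filter.mp hfbfilt).2.2
    have : x a ∈ f b := hτfb (Finset.mem_insert_self _ _)
    rcases Finset.mem_insert.mp this with h | h
    · exact h
    · exact absurd (Finset.mem_of_mem_erase h) (hxa a ha)
  -- pick the common new vertex
  have hne : (σ.erase u).Nonempty := by
    rw [← Finset.card_pos, Finset.card_erase_of_mem huσ, hσcard]; omega
  obtain ⟨a0, ha0⟩ := hne
  set X := x a0 with hX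
  have hXσ : X ∉ σ := hxa a0 ha0
  have hfeq : ∀ a ∈ σ.erase u, f a = insert X (σ.erase a) := by
    intro a ha
    by_cases h : a = a0
    · subst h; rfl
    · rw [hf, hX, hxx a0 ha0 a ha (fun hh => h hh.symm)]
  refine ⟨X, hXσ, ?_, ?_⟩
  · intro ρ hρC hρcard huρ
    have hρT : ρ ∈ T := hFT ▸ Finset.mem_filter.mpr ⟨hρC, hρcard, huρ⟩
    rcases Finset.mem_insert.mp hρT with rfl | hρT
    · exact Finset.subset_insert _ _
    · obtain ⟨a, ha, rfl⟩ := Finset.mem_image.mp hρT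
      rw [hfeq a ha]
      exact Finset.insert_subset_insert _ (Finset.erase_subset _ _)
  · intro ρ hρsub hρcard huρ
    have hScard : (insert X σ).card = d + 2 := by
      rw [Finset.card_insert_of_notMem hXσ, hσcard]
    have hss : ρ ⊂ insert X σ := hρsub.ssubset_of_ne (by
      intro h; rw [h, hScard] at hρcard; omega)
    obtain ⟨w, hwS, hwρ⟩ := Finset.exists_of_ssubset hss
    have hρeq : ρ = (insert X σ).erase w := by
      refine Finset.eq_of_subset_of_card_le (Finset.subset_erase.mpr ⟨hρsub, hwρ⟩) ?_
      rw [Finset.card_erase_of_mem hwS, hScard, hρcard]; omega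
    by_cases hwX : w = X
    · subst hwX
      rw [hρeq, Finset.erase_insert hXσ]
      exact hσ
    · have hwσ : w ∈ σ := by
        rcases Finset.mem_insert.mp hwS with h | h
        · exact absurd h hwX
        · exact h
      have hwu : w ≠ u := fun h => hwρ (h ▸ huρ)
      have hw : w ∈ σ.erase u := Finset.mem_erase.mpr ⟨hwu, hwσ⟩
      have : ρ = f w := by
        rw [hρeq, hfeq w hw]
        ext y
        simp only [Finset.mem_erase, Finset.mem_insert]
        constructor
        · rintro ⟨hyw, hy | hy⟩
          · exact Or.inl hy
          · exact Or.inr ⟨hyw, hy⟩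
        · rintro (rfl | ⟨hy1, hy2⟩)
          · exact ⟨fun h => hwX h.symm, Or.inl rfl⟩
          · exact ⟨hy1, Or.inr hy2⟩
      rw [this]
      exact hfC w hw

/-- Let `d ≥ 2` and `C` a finite `d`-core. If `u ≠ v` are vertices of `C`, each
contained in exactly `d+1` `d`-faces, lying in a common `d`-face `σ`, then `σ` is a
`d`-face of a subcomplex of `C` isomorphic to the boundary of a `(d+1)`-simplex:
there is a set `S` of `d+2` vertices containing `σ` all of whose `(d+1)`-element
subsets are faces of `C`. -/
theorem common_face_of_two_low_degree_vertices {V : Type*} [DecidableEq V]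
    (d : ℕ) (hd : 2 ≤ d) (C : Finset (Finset V))
    (hC : IsSimplicialComplex C) (hdim : DimLE C d) (hcore : IsCore C d)
    (u v : V) (huv : u ≠ v)
    (hdegu : (C.filter fun σ => σ.card = d + 1 ∧ u ∈ σ).card = d + 1)
    (hdegv : (C.filter fun σ => σ.card = d + 1 ∧ v ∈ σ).card = d + 1)
    (σ : Finset V) (hσ : σ ∈ C) (hσcard : σ.card = d + 1)
    (huσ : u ∈ σ) (hvσ : v ∈ σ) :
    ∃ S : Finset V, S.card = d + 2 ∧ σ ⊆ S ∧
      ∀ τ ⊆ S, τ.card = d + 1 → τ ∈ C := by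
  classical
  obtain ⟨xu, hxuσ, hxu1, hxu2⟩ := link_struct d hd C hC hcore u hdegu σ hσ hσcard huσ
  obtain ⟨xv, hxvσ, hxv1, hxv2⟩ := link_struct d hd C hC hcore v hdegv σ hσ hσcard hvσ
  have hvσu : v ∈ σ.erase u := Finset.mem_erase.mpr ⟨huv.symm, hvσ⟩
  have hne : ((σ.erase u).erase v).Nonempty := by
    rw [← Finset.card_pos, Finset.card_erase_of_mem hvσu,
      Finset.card_erase_of_mem huσ, hσcard]
    omega
  obtain ⟨w, hw⟩ := hne
  have hwv : w ≠ v := (Finset.mem_erase.mp hw).1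
  have hwu : w ≠ u := (Finset.mem_erase.mp (Finset.mem_of_mem_erase hw)).1
  have hwσ : w ∈ σ := Finset.mem_of_mem_erase (Finset.mem_of_mem_erase hw)
  set τ := σ.erase w with hτ
  have hτC : τ ∈ C := hC σ hσ _ (Finset.erase_subset _ _)
  have hτcard : τ.card = d := by
    rw [hτ, Finset.card_erase_of_mem hwσ, hσcard]; omega
  have h2 := hcore _ hτC hτcard
  have hσmem : σ ∈ C.filter fun ρ => ρ.card = d + 1 ∧ τ ⊆ ρ := by
    simp [Finset.mem_filter, hσ, hσcard, hτ, Finset.erase_subset]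
  obtain ⟨G, hG, hGne⟩ := Finset.exists_mem_ne (lt_of_lt_of_le one_lt_two h2) σ
  rw [Finset.mem_filter] at hG
  obtain ⟨hGC, hGcard, hGsub⟩ := hG
  have huG : u ∈ G := hGsub (Finset.mem_erase.mpr ⟨fun h => hwu h.symm, huσ⟩)
  have hvG : v ∈ G := hGsub (Finset.mem_erase.mpr ⟨fun h => hwv h.symm, hvσ⟩)
  have hGu : G ⊆ insert xu σ := hxu1 G hGC hGcard huG
  have hGv : G ⊆ insert xv σ := hxv1 G hGC hGcard hvG
  have hxeq : xu = xv := by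
    by_contra hxy
    have hGσ : G ⊆ σ := by
      intro y hy
      rcases Finset.mem_insert.mp (hGu hy) with rfl | h
      · rcases Finset.mem_insert.mp (hGv hy) with h' | h'
        · exact absurd h' hxy
        · exact h'
      · exact h
    exact hGne (Finset.eq_of_subset_of_card_le hGσ (by rw [hGcard, hσcard]))
  refine ⟨insert xu σ, by rw [Finset.card_insert_of_notMem hxuσ, hσcard],
    Finset.subset_insert _ _, ?_⟩
  intro ρ hρS hρcard
  by_cases hu : u ∈ ρ
  · exact hxu2 ρ hρS hρcard hu
  · have hv : v ∈ ρ := by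
      by_contra hv
      have hsub : ρ ⊆ ((insert xu σ).erase u).erase v :=
        Finset.subset_erase.mpr ⟨Finset.subset_erase.mpr ⟨hρS, hu⟩, hv⟩
      have hc := Finset.card_le_card hsub
      rw [hρcard, Finset.card_erase_of_mem
        (Finset.mem_erase.mpr ⟨huv.symm, Finset.mem_insert_of_mem hvσ⟩),
        Finset.card_erase_of_mem (Finset.mem_insert_of_mem huσ),
        Finset.card_insert_of_notMem hxuσ, hσcard] at hc
      omega
    exact hxv2 ρ (hxeq ▸ hρS) hρcard hv
end

section
/- Let d ≥ 2 be an integer. Then the constant c_d = ψ(x*), where ψ(x) = −ln(x)/(1−x)^d and x* is the unique root in (0,1) of (d+1)(1−x) + (1+dx)ln(x) = 0, satisfies γ_d < c_d < d+1, where γ_d = min_{x∈(0,1)} ψ(x). -/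
/-!
Write `ψ(x) = -log x / (1 - x) ^ d`. The root equation gives `-log x* = (d+1)(1-x*)/(1+d x*)`.
Together with `√x · (-log x) < 1 - x` (which is `sinh u < u` for `u = log √x < 0`) it forces
`d² x* < 1`. Then `ψ'(x*)` has the sign of `-(1 + d x*)⁻¹ (1 - x*)(1 - d² x*) ≠ 0`, so `x*` is not
a minimiser and `γ < ψ(x*)`; and Bernoulli's inequality `(1 - x*)^d ≥ 1 - d x*` gives
`(1 + d x*)(1 - x*)^d > 1 - x*`, which is `ψ(x*) < d + 1`.
-/

open Real Set Filter Topology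

lemma sqrt_mul_neg_log_lt_one_sub {x : ℝ} (hx0 : 0 < x) (hx1 : x < 1) :
    √x * -log x < 1 - x := by
  have hs0 : 0 < √x := sqrt_pos.mpr hx0
  have hs1 : √x < 1 := (sqrt_lt' one_pos).mpr (by simpa using hx1)
  have hsinh : (√x - (√x)⁻¹) / 2 < log x / 2 := by
    rw [← sinh_log hs0, ← log_sqrt hx0.le]
    exact sinh_lt_self_iff.mpr (log_neg hs0 hs1)
  have hsq : √x * √x = x := mul_self_sqrt hx0.le
  have hinv : √x * (√x)⁻¹ = 1 := mul_inv_cancel₀ hs0.ne'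
  nlinarith

lemma sq_mul_lt_one_of_root {d x : ℝ} (hd : 0 ≤ d) (hx : x ∈ Ioo 0 1)
    (hroot : (d + 1) * (1 - x) + (1 + d * x) * log x = 0) : d ^ 2 * x < 1 := by
  obtain ⟨hx0, hx1⟩ := hx
  by_contra! hge
  have hs0 : 0 < √x := sqrt_pos.mpr hx0
  have hsq : √x * √x = x := mul_self_sqrt hx0.le
  have hs1 : √x < 1 := by nlinarith
  have hds : 1 ≤ d * √x := by nlinarith [mul_nonneg hd hs0.le]
  have hcoef : 1 + d * x ≤ (d + 1) * √x := by
    nlinarith [mul_nonneg (sub_nonneg.mpr hs1.le) (sub_nonneg.mpr hds)]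
  have hlog : 0 < -log x := neg_pos.mpr (log_neg hx0 hx1)
  have hkey := sqrt_mul_neg_log_lt_one_sub hx0 hx1
  have hlt : (1 + d * x) * -log x < (d + 1) * (1 - x) :=
    calc (1 + d * x) * -log x ≤ (d + 1) * √x * -log x := by gcongr
      _ = (d + 1) * (√x * -log x) := by ring
      _ < (d + 1) * (1 - x) := by gcongr
  linarith

lemma one_sub_lt_one_add_mul_mul_one_sub_pow {x : ℝ} (n : ℕ) (hx0 : 0 < x) (hx2 : x ≤ 2)
    (h : (n : ℝ) ^ 2 * x < 1) : 1 - x < (1 + n * x) * (1 - x) ^ n := by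
  have hbernoulli : 1 - n * x ≤ (1 - x) ^ n := by
    simpa [sub_eq_add_neg] using one_add_mul_le_pow (a := -x) (by linarith) n
  calc 1 - x < (1 + n * x) * (1 - n * x) := by nlinarith
    _ ≤ (1 + n * x) * (1 - x) ^ n := by gcongr

lemma hasDerivAt_neg_log_div_one_sub_pow (d : ℕ) {x : ℝ} (hx0 : x ≠ 0) (hx1 : x ≠ 1) :
    HasDerivAt (fun x => -log x / (1 - x) ^ d)
      (-(1 - x + d * x * log x) / (x * (1 - x) ^ (d + 1))) x := by
  have h1x : 1 - x ≠ 0 := sub_ne_zero.mpr hx1.symm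
  refine ((hasDerivAt_log hx0).neg.fun_div (((hasDerivAt_id' x).const_sub 1).fun_pow d)
    (pow_ne_zero d h1x)).congr_deriv ?_
  rcases d with _ | d
  · field_simp
    ring
  · simp only [Nat.add_sub_cancel, Pi.neg_apply]
    field_simp
    ring

lemma IsLeast.lt_of_hasDerivAt_ne_zero {f : ℝ → ℝ} {s : Set ℝ} {γ x f' : ℝ}
    (hγ : IsLeast (f '' s) γ) (hs : s ∈ 𝓝 x) (hf : HasDerivAt f f' x) (hf' : f' ≠ 0) :
    γ < f x := by
  refine (hγ.2 ⟨x, mem_of_mem_nhds hs, rfl⟩).lt_of_ne fun h => hf' ?_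
  refine IsLocalMin.hasDerivAt_eq_zero ?_ hf
  filter_upwards [hs] with y hy
  exact h ▸ hγ.2 ⟨y, hy, rfl⟩

theorem gamma_lt_c_lt_d_add_one_general (d : ℕ) (γ xstar : ℝ)
    (hγ : IsLeast ((fun x : ℝ => -Real.log x / (1 - x) ^ d) '' Set.Ioo (0:ℝ) 1) γ)
    (hx : xstar ∈ Set.Ioo (0:ℝ) 1)
    (hroot : ((d:ℝ) + 1) * (1 - xstar) + (1 + (d:ℝ) * xstar) * Real.log xstar = 0) :
    γ < -Real.log xstar / (1 - xstar) ^ d ∧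
      -Real.log xstar / (1 - xstar) ^ d < (d:ℝ) + 1 := by
  obtain ⟨hx0, hx1⟩ := hx
  have hsmall : (d : ℝ) ^ 2 * xstar < 1 := sq_mul_lt_one_of_root d.cast_nonneg ⟨hx0, hx1⟩ hroot
  have hcoef : 0 < 1 + d * xstar := by positivity
  have h1x : 0 < 1 - xstar := sub_pos.mpr hx1
  constructor
  · refine hγ.lt_of_hasDerivAt_ne_zero (Ioo_mem_nhds hx0 hx1)
      (hasDerivAt_neg_log_div_one_sub_pow d hx0.ne' hx1.ne) (div_ne_zero ?_ (by positivity))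
    have hcrit : (1 + d * xstar) * (1 - xstar + d * xstar * log xstar) =
        (1 - xstar) * (1 - d ^ 2 * xstar) := by
      linear_combination d * xstar * hroot
    refine neg_ne_zero.mpr fun h => ?_
    rw [h, mul_zero] at hcrit
    nlinarith
  · have hbound := one_sub_lt_one_add_mul_mul_one_sub_pow d hx0 (by linarith) hsmall
    rw [div_lt_iff₀ (by positivity)]
    refine lt_of_mul_lt_mul_left ?_ hcoef.le
    calc (1 + d * xstar) * -log xstar = (d + 1) * (1 - xstar) := by linear_combination -hroot
      _ < (d + 1) * ((1 + d * xstar) * (1 - xstar) ^ d) := by gcongr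
      _ = (1 + d * xstar) * ((d + 1) * (1 - xstar) ^ d) := by ring

/-- Let `d ≥ 2`, `ψ(x) = -ln x/(1-x)^d`, `γ_d = min_{(0,1)} ψ`, and `x*` the
unique root in `(0,1)` of `(d+1)(1-x) + (1+dx)ln x = 0`.  Then
`c_d = ψ(x*)` satisfies `γ_d < c_d < d + 1`. -/
theorem gamma_lt_c_lt_d_add_one (d : ℕ) (hd : 2 ≤ d) (γ xstar : ℝ)
    (hγ : IsLeast ((fun x : ℝ => -Real.log x / (1 - x) ^ d) '' Set.Ioo (0:ℝ) 1) γ)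
    (hx : xstar ∈ Set.Ioo (0:ℝ) 1)
    (hroot : ((d:ℝ) + 1) * (1 - xstar) + (1 + (d:ℝ) * xstar) * Real.log xstar = 0) :
    γ < -Real.log xstar / (1 - xstar) ^ d ∧
      -Real.log xstar / (1 - xstar) ^ d < (d:ℝ) + 1 :=
  gamma_lt_c_lt_d_add_one_general d γ xstar hγ hx hroot
end

section
/- Let d ≥ 2, c > 0, and t = exp(−c(1−t)^d) with t ∈ (0,1). Then the function g_d(c) = (c/(d+1))(1−t(c))^{d+1} − (1−t(c)) + c·t(c)·(1−t(c))^d, where t(c) is the smallest root in (0,1) of t = exp(−c(1−t)^d), satisfies: at any c where t(c) is differentiable, g_d'(c) = (1−t(c))^{d+1}/(d+1). -/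
/-!
Write `u = 1 - t`. Differentiating `g_d` gives
`g_d' = u^{d+1}/(d+1) + t' (1 - c d t u^{d-1}) + t u^d` for any differentiable `t`, while
differentiating the fixed-point relation `t = exp(-c u^d)` gives `t' (1 - c d t u^{d-1}) = -t u^d`;
so every term involving `t'` cancels.
-/

noncomputable section

/-- The function `g_d` of the statement, for an arbitrary `t`. -/
def limitBetti (d : ℕ) (t : ℝ → ℝ) (x : ℝ) : ℝ :=
  x / ((d : ℝ) + 1) * (1 - t x) ^ (d + 1) - (1 - t x) + x * t x * (1 - t x) ^ d

theorem hasDerivAt_limitBetti (d : ℕ) {t : ℝ → ℝ} {c t' : ℝ} (ht : HasDerivAt t t' c) :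
    HasDerivAt (limitBetti d t)
      ((1 - t c) ^ (d + 1) / ((d : ℝ) + 1)
        + t' * (1 - c * d * t c * (1 - t c) ^ (d - 1)) + t c * (1 - t c) ^ d) c := by
  have hu : HasDerivAt (fun x => 1 - t x) (-t') c := ht.const_sub 1
  have h₁ : HasDerivAt (fun x => x / ((d : ℝ) + 1) * (1 - t x) ^ (d + 1))
      (1 / ((d : ℝ) + 1) * (1 - t c) ^ (d + 1)
        + c / ((d : ℝ) + 1) * (((d + 1 : ℕ) : ℝ) * (1 - t c) ^ d * -t')) c :=
    ((hasDerivAt_id' c).div_const _).mul (hu.pow (d + 1))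
  have h₃ : HasDerivAt (fun x => x * t x * (1 - t x) ^ d)
      ((1 * t c + c * t') * (1 - t c) ^ d + c * t c * (d * (1 - t c) ^ (d - 1) * -t')) c :=
    ((hasDerivAt_id' c).mul ht).mul (hu.pow d)
  refine ((h₁.sub hu).add h₃).congr_deriv ?_
  have hd : ((d : ℝ) + 1) ≠ 0 := by positivity
  push_cast
  field_simp
  ring

theorem HasDerivAt.mul_eq_of_eq_exp_neg_mul_pow {d : ℕ} {t : ℝ → ℝ} {c t' : ℝ}
    (ht : HasDerivAt t t' c) (hfix : ∀ x, t x = Real.exp (-x * (1 - t x) ^ d)) :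
    t' * (1 - c * d * t c * (1 - t c) ^ (d - 1)) = -(t c * (1 - t c) ^ d) := by
  have hinner : HasDerivAt (fun x => -x * (1 - t x) ^ d)
      (-1 * (1 - t c) ^ d + -c * (d * (1 - t c) ^ (d - 1) * -t')) c :=
    (hasDerivAt_id' c).neg.mul ((ht.const_sub 1).pow d)
  have hexp := hinner.exp
  rw [← funext hfix, ← hfix c] at hexp
  linear_combination ht.unique hexp

theorem deriv_of_limit_betti_general (d : ℕ) (t : ℝ → ℝ) (c t' : ℝ)
    (hfix : ∀ x, t x = Real.exp (-x * (1 - t x) ^ d))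
    (hderiv : HasDerivAt t t' c) :
    HasDerivAt (fun x =>
        x / ((d:ℝ) + 1) * (1 - t x) ^ (d + 1) - (1 - t x) + x * t x * (1 - t x) ^ d)
      ((1 - t c) ^ (d + 1) / ((d:ℝ) + 1)) c := by
  refine (hasDerivAt_limitBetti d hderiv).congr_deriv ?_
  rw [hderiv.mul_eq_of_eq_exp_neg_mul_pow hfix]
  ring

/-- Let `d ≥ 2` and suppose `t : ℝ → ℝ` satisfies the fixed-point relation
`t(x) = exp(-x(1-t(x))^d)` for all `x`, with `t(c) ∈ (0,1)` and `t` differentiable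
at `c`.  Then `g_d(x) = (x/(d+1))(1-t(x))^{d+1} - (1-t(x)) + x·t(x)·(1-t(x))^d`
is differentiable at `c` with derivative `(1-t(c))^{d+1}/(d+1)`. -/
theorem deriv_of_limit_betti (d : ℕ) (hd : 2 ≤ d) (t : ℝ → ℝ) (c t' : ℝ)
    (hfix : ∀ x, t x = Real.exp (-x * (1 - t x) ^ d))
    (htc : t c ∈ Set.Ioo (0:ℝ) 1)
    (hderiv : HasDerivAt t t' c) :
    HasDerivAt (fun x =>
        x / ((d:ℝ) + 1) * (1 - t x) ^ (d + 1) - (1 - t x) + x * t x * (1 - t x) ^ d)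
      ((1 - t c) ^ (d + 1) / ((d:ℝ) + 1)) c :=
  deriv_of_limit_betti_general d t c t' hfix hderiv

end
end
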